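/- arXiv:2205.12442 — 2 statements merged into one kernel-verified Lean document; each statement's English description precedes it below -/
import Mathlib

section
/- Let x : [0,T] → ℝⁿ be differentiable, let a : [0,T] → ℝ be positive and differentiable with derivative a' ≥ 0, and suppose for each coordinate i and each t, x_i'(t) ≤ (a'(t)/a(t))·(1 − x_i(t)) with x_i(0) = 0. Then for all t ∈ [0,T], 1 − x_i(t) ≥ a(0)/a(t) > 0. -/
/-- Grönwall-type feasibility estimate for measured continuous greedy. -/
theorem stmt_2 {n : ℕ} (T : ℝ) (hT : 0 ≤ T)
    (x : ℝ → (Fin n → ℝ)) (x' : ℝ → (Fin n → ℝ)) (a a' : ℝ → ℝ)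
    (hx : ∀ i : Fin n, ∀ t ∈ Set.Icc 0 T, HasDerivAt (fun s => x s i) (x' t i) t)
    (ha : ∀ t ∈ Set.Icc 0 T, HasDerivAt a (a' t) t)
    (hapos : ∀ t ∈ Set.Icc 0 T, 0 < a t)
    (ha' : ∀ t ∈ Set.Icc 0 T, 0 ≤ a' t)
    (hineq : ∀ i : Fin n, ∀ t ∈ Set.Icc 0 T, x' t i ≤ a' t / a t * (1 - x t i))
    (hx0 : ∀ i : Fin n, x 0 i = 0) :
    ∀ i : Fin n, ∀ t ∈ Set.Icc 0 T, 1 - x t i ≥ a 0 / a t ∧ 0 < a 0 / a t := by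
  intro i t ht
  have h0 : (0:ℝ) ∈ Set.Icc 0 T := ⟨le_refl 0, hT⟩
  set f : ℝ → ℝ := fun s => a s * (1 - x s i) with hf
  have hfd : ∀ s ∈ Set.Icc 0 T,
      HasDerivAt f (a' s * (1 - x s i) + a s * (-(x' s i))) s := by
    intro s hs
    exact (ha s hs).mul (((hx i s hs).const_sub 1))
  -- f is monotone on [0,T]
  have hmono : MonotoneOn f (Set.Icc 0 T) := by
    apply monotoneOn_of_deriv_nonneg (convex_Icc 0 T)
    · exact fun s hs => ((hfd s hs).continuousAt.continuousWithinAt)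
    · intro s hs
      rw [interior_Icc] at hs
      exact ((hfd s (Set.mem_Icc_of_Ioo hs)).differentiableAt.differentiableWithinAt)
    · intro s hs
      rw [interior_Icc] at hs
      have hs' := Set.mem_Icc_of_Ioo hs
      rw [(hfd s hs').deriv]
      have hane : a s ≠ 0 := (hapos s hs').ne'
      have h1 : a s * (x' s i) ≤ a s * (a' s / a s * (1 - x s i)) :=
        mul_le_mul_of_nonneg_left (hineq i s hs') (hapos s hs').le
      have h2 : a s * (a' s / a s * (1 - x s i)) = a' s * (1 - x s i) := by
        field_simp
      nlinarith [h1, h2]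
  have hft : f 0 ≤ f t := hmono h0 ht ht.1
  have hf0 : f 0 = a 0 := by simp [hf, hx0 i]
  have hat : 0 < a t := hapos t ht
  constructor
  · rw [ge_iff_le, div_le_iff₀ hat]
    rw [hf0] at hft
    have hft' : a 0 ≤ a t * (1 - x t i) := hft
    linarith [mul_comm (a t) (1 - x t i)]
  · exact div_pos (hapos 0 h0) hat
end

section
/- Let x : [0,T] → ℝⁿ be differentiable, a : [0,T] → ℝ positive differentiable with a' ≥ 0, and suppose for each coordinate i, x_i'(t) ≤ (a'(t)/(2a(t)))·(1 − x_i(t)) with x_i(0) = 0. Then for all t ∈ [0,T], 1 − x_i(t) ≥ √(a(0)/a(t)) > 0. -/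
/-!
`√a` is an integrating factor for the differential inequality `x' ≤ a' / (2a) · (1 - x)`:
the derivative of `(1 - x) √a` is `√a · (a' / (2a) · (1 - x) - x') ≥ 0`, so `(1 - x) √a` is
nondecreasing, and `(1 - x(t)) √(a t) ≥ √(a 0)` because `x(0) = 0`.
-/

open Set

theorem hasDerivAt_one_sub_mul_sqrt {f a : ℝ → ℝ} {f' a' t : ℝ}
    (hf : HasDerivAt f f' t) (ha : HasDerivAt a a' t) (hat : 0 < a t) :
    HasDerivAt (fun s => (1 - f s) * √(a s))
      (√(a t) * (a' / (2 * a t) * (1 - f t) - f')) t := by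
  have hsqrt : √(a t) * √(a t) = a t := Real.mul_self_sqrt hat.le
  refine ((hf.const_sub 1).mul (ha.sqrt hat.ne')).congr_deriv ?_
  field_simp
  linear_combination -(a' * (1 - f t)) * hsqrt

theorem monotoneOn_one_sub_mul_sqrt {D : Set ℝ} (hD : Convex ℝ D) {f f' a a' : ℝ → ℝ}
    (hf : ∀ t ∈ D, HasDerivAt f (f' t) t) (ha : ∀ t ∈ D, HasDerivAt a (a' t) t)
    (hapos : ∀ t ∈ D, 0 < a t) (hineq : ∀ t ∈ D, f' t ≤ a' t / (2 * a t) * (1 - f t)) :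
    MonotoneOn (fun s => (1 - f s) * √(a s)) D := by
  have hderiv (t) (ht : t ∈ D) := hasDerivAt_one_sub_mul_sqrt (hf t ht) (ha t ht) (hapos t ht)
  refine monotoneOn_of_hasDerivWithinAt_nonneg hD
    (fun t ht => (hderiv t ht).continuousAt.continuousWithinAt)
    (fun t ht => (hderiv t (interior_subset ht)).hasDerivWithinAt) fun t ht => ?_
  exact mul_nonneg (Real.sqrt_nonneg _) (sub_nonneg.2 (hineq t (interior_subset ht)))

theorem stmt_3_general {n : ℕ} (T : ℝ)
    (x : ℝ → (Fin n → ℝ)) (x' : ℝ → (Fin n → ℝ)) (a a' : ℝ → ℝ)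
    (hx : ∀ i : Fin n, ∀ t ∈ Set.Icc 0 T, HasDerivAt (fun s => x s i) (x' t i) t)
    (ha : ∀ t ∈ Set.Icc 0 T, HasDerivAt a (a' t) t)
    (hapos : ∀ t ∈ Set.Icc 0 T, 0 < a t)
    (hineq : ∀ i : Fin n, ∀ t ∈ Set.Icc 0 T, x' t i ≤ a' t / (2 * a t) * (1 - x t i))
    (hx0 : ∀ i : Fin n, x 0 i = 0) :
    ∀ i : Fin n, ∀ t ∈ Set.Icc 0 T,
      1 - x t i ≥ Real.sqrt (a 0 / a t) ∧ 0 < Real.sqrt (a 0 / a t) := by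
  intro i t ht
  have h0 : (0 : ℝ) ∈ Icc 0 T := ⟨le_rfl, ht.1.trans ht.2⟩
  have hmono := monotoneOn_one_sub_mul_sqrt (convex_Icc 0 T) (hx i) ha hapos (hineq i)
  have key : √(a 0) ≤ (1 - x t i) * √(a t) := by simpa [hx0 i] using hmono h0 ht ht.1
  refine ⟨?_, Real.sqrt_pos.2 (div_pos (hapos 0 h0) (hapos t ht))⟩
  rw [ge_iff_le, Real.sqrt_div' _ (hapos t ht).le]
  exact (div_le_iff₀ (Real.sqrt_pos.2 (hapos t ht))).2 key

/-- Grönwall-type feasibility estimate for continuous-time Frank–Wolfe. -/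
theorem stmt_3 {n : ℕ} (T : ℝ) (hT : 0 ≤ T)
    (x : ℝ → (Fin n → ℝ)) (x' : ℝ → (Fin n → ℝ)) (a a' : ℝ → ℝ)
    (hx : ∀ i : Fin n, ∀ t ∈ Set.Icc 0 T, HasDerivAt (fun s => x s i) (x' t i) t)
    (ha : ∀ t ∈ Set.Icc 0 T, HasDerivAt a (a' t) t)
    (hapos : ∀ t ∈ Set.Icc 0 T, 0 < a t)
    (ha' : ∀ t ∈ Set.Icc 0 T, 0 ≤ a' t)
    (hineq : ∀ i : Fin n, ∀ t ∈ Set.Icc 0 T, x' t i ≤ a' t / (2 * a t) * (1 - x t i))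
    (hx0 : ∀ i : Fin n, x 0 i = 0) :
    ∀ i : Fin n, ∀ t ∈ Set.Icc 0 T,
      1 - x t i ≥ Real.sqrt (a 0 / a t) ∧ 0 < Real.sqrt (a 0 / a t) :=
  stmt_3_general T x x' a a' hx ha hapos hineq hx0
end
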